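/- Let Q ∈ ℝ^{n×n} be symmetric and A ∈ ℝ^{m×n}. Suppose ‖Q‖ ≤ L, ‖A‖ ≤ L for some L > 0, Z^⊤ Q Z ⪰ γ I for every matrix Z whose columns form an orthonormal basis of the null space of A (reduced Hessian condition, γ > 0), and A A^⊤ ⪰ β I with β > 0. Then with μ := (2L²/γ + γ + L)/β, the matrix Q + μ A^⊤ A is positive definite with Q + μ A^⊤ A ⪰ (γ/2) I. -/

import Mathlib

open Matrix BigOperators

/-- Euclidean (ℓ²) norm of a finitely indexed real vector. -/
noncomputable def vnorm {n : Type*} [Fintype n] (v : n → ℝ) : ℝ :=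
  Real.sqrt (∑ i, v i ^ 2)

lemma vnorm_nonneg {n : Type*} [Fintype n] (v : n → ℝ) : 0 ≤ vnorm v :=
  Real.sqrt_nonneg _

lemma vnorm_sq {n : Type*} [Fintype n] (v : n → ℝ) : vnorm v ^ 2 = v ⬝ᵥ v := by
  rw [vnorm, Real.sq_sqrt (Finset.sum_nonneg fun i _ => sq_nonneg _)]
  simp [dotProduct, sq]

lemma dot_le_vnorm {n : Type*} [Fintype n] (u v : n → ℝ) :
    u ⬝ᵥ v ≤ vnorm u * vnorm v := by
  simpa [dotProduct, vnorm] using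
    Real.sum_mul_le_sqrt_mul_sqrt Finset.univ u v

lemma neg_vnorm_le_dot {n : Type*} [Fintype n] (u v : n → ℝ) :
    -(vnorm u * vnorm v) ≤ u ⬝ᵥ v := by
  have := dot_le_vnorm u (-v)
  simp only [dotProduct_neg] at this
  have hv : vnorm (-v) = vnorm v := by simp [vnorm]
  rw [hv] at this
  linarith

set_option maxHeartbeats 1000000 in
/-- convexification.  Let `Q` be symmetric with `‖Q‖ ≤ L`, `A` with
`‖A‖ ≤ L` (induced 2-norms), suppose the reduced Hessian condition `ZᵀQZ ⪰ γI` on the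
null space of `A` holds (i.e. `xᵀQx ≥ γ‖x‖²` whenever `Ax = 0`) with `γ > 0`, and
`AAᵀ ⪰ βI` with `β > 0`.  Then with `μ := (2L²/γ + γ + L)/β`, the matrix `Q + μAᵀA` is
positive definite with `Q + μAᵀA ⪰ (γ/2)I`. -/
theorem convexification {n m : Type*} [Fintype n] [DecidableEq n] [Fintype m]
    [DecidableEq m]
    (Q : Matrix n n ℝ) (A : Matrix m n ℝ) (L γ β : ℝ)
    (hQsymm : Q.IsSymm) (hL : 0 < L) (hγ : 0 < γ) (hβ : 0 < β)
    (hQnorm : ∀ v : n → ℝ, vnorm (Q *ᵥ v) ≤ L * vnorm v)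
    (hAnorm : ∀ v : n → ℝ, vnorm (A *ᵥ v) ≤ L * vnorm v)
    (hredH : ∀ x : n → ℝ, A *ᵥ x = 0 → γ * vnorm x ^ 2 ≤ x ⬝ᵥ (Q *ᵥ x))
    (hlicq : ((A * Aᵀ) - β • (1 : Matrix m m ℝ)).PosSemidef) :
    ((Q + ((2 * L ^ 2 / γ + γ + L) / β) • (Aᵀ * A)) -
        (γ / 2) • (1 : Matrix n n ℝ)).PosSemidef ∧
    (Q + ((2 * L ^ 2 / γ + γ + L) / β) • (Aᵀ * A)).PosDef := by
  have hμβ : (2 * L ^ 2 / γ + γ + L) / β * β = 2 * L ^ 2 / γ + γ + L :=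
    div_mul_cancel₀ _ hβ.ne'
  have hμpos : 0 < (2 * L ^ 2 / γ + γ + L) / β := by positivity
  set μ := (2 * L ^ 2 / γ + γ + L) / β with hμdef
  have hdivγ : 2 * L ^ 2 / γ * γ = 2 * L ^ 2 := div_mul_cancel₀ _ hγ.ne'
  -- positive definiteness of A * Aᵀ
  have hMpd : (A * Aᵀ).PosDef := by
    rw [posDef_iff_dotProduct_mulVec]
    constructor
    · rw [Matrix.IsHermitian, conjTranspose_eq_transpose_of_trivial, transpose_mul,
        transpose_transpose]
    · intro c hc
      have h1 := hlicq.dotProduct_mulVec_nonneg c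
      simp only [star_trivial, sub_mulVec, dotProduct_sub, smul_mulVec, one_mulVec,
        dotProduct_smul, smul_eq_mul] at h1
      have h2 : 0 < c ⬝ᵥ c := by
        rcases lt_or_eq_of_le (Finset.sum_nonneg fun i _ => mul_self_nonneg (c i)) with h | h
        · exact h
        · exact absurd (dotProduct_self_eq_zero.mp h.symm) hc
      simp only [star_trivial]
      nlinarith [mul_pos hβ h2]
  have hdet : IsUnit (A * Aᵀ).det := (Matrix.isUnit_iff_isUnit_det _).mp hMpd.isUnit
  -- the key quadratic lower bound
  have key : ∀ x : n → ℝ,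
      γ / 2 * vnorm x ^ 2 ≤ x ⬝ᵥ ((Q + μ • (Aᵀ * A)) *ᵥ x) := by
    intro x
    set c : m → ℝ := (A * Aᵀ)⁻¹ *ᵥ (A *ᵥ x) with hc
    set y : n → ℝ := Aᵀ *ᵥ c with hy
    set z : n → ℝ := x - y with hz
    have hxzy : x = z + y := by rw [hz]; ring
    have hMc : (A * Aᵀ) *ᵥ c = A *ᵥ x := by
      rw [hc, mulVec_mulVec, Matrix.mul_nonsing_inv _ hdet, one_mulVec]
    have hAy : A *ᵥ y = A *ᵥ x := by rw [hy, mulVec_mulVec, hMc]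
    have hAz : A *ᵥ z = 0 := by rw [hz, mulVec_sub, hAy, sub_self]
    have horth : z ⬝ᵥ y = 0 := by
      rw [hy, dotProduct_mulVec, vecMul_transpose, hAz, zero_dotProduct]
    have ha0 : 0 ≤ vnorm z := vnorm_nonneg z
    have hb0 : 0 ≤ vnorm y := vnorm_nonneg y
    -- Pythagoras
    have hx2 : vnorm x ^ 2 = vnorm z ^ 2 + vnorm y ^ 2 := by
      rw [vnorm_sq, vnorm_sq, vnorm_sq, hxzy, add_dotProduct, dotProduct_add,
        dotProduct_add, horth, dotProduct_comm y z, horth]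
      ring
    -- reduced Hessian bound
    have hQz : γ * vnorm z ^ 2 ≤ z ⬝ᵥ (Q *ᵥ z) := hredH z hAz
    -- cross term bound
    have hcross : -(vnorm z * (L * vnorm y)) ≤ z ⬝ᵥ (Q *ᵥ y) := by
      have h1 := neg_vnorm_le_dot z (Q *ᵥ y)
      have h3 := mul_le_mul_of_nonneg_left (hQnorm y) (vnorm_nonneg z)
      linarith
    have hyQy : -(vnorm y * (L * vnorm y)) ≤ y ⬝ᵥ (Q *ᵥ y) := by
      have h1 := neg_vnorm_le_dot y (Q *ᵥ y)
      have h3 := mul_le_mul_of_nonneg_left (hQnorm y) (vnorm_nonneg y)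
      linarith
    have hsym : y ⬝ᵥ (Q *ᵥ z) = z ⬝ᵥ (Q *ᵥ y) := by
      conv_lhs => rw [dotProduct_mulVec, ← hQsymm, vecMul_transpose, dotProduct_comm]
    -- ‖Ax‖² as a quadratic form
    have hAx2 : vnorm (A *ᵥ x) ^ 2 = x ⬝ᵥ ((Aᵀ * A) *ᵥ x) := by
      rw [vnorm_sq, ← mulVec_mulVec, dotProduct_mulVec x Aᵀ, vecMul_transpose]
    -- β‖y‖² ≤ ‖Ax‖²
    have hb2 : vnorm y ^ 2 = c ⬝ᵥ (A *ᵥ x) := by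
      rw [vnorm_sq]
      conv_lhs => rw [hy, dotProduct_mulVec, vecMul_transpose, mulVec_mulVec, hMc,
        dotProduct_comm]
    have hcM : β * vnorm c ^ 2 ≤ c ⬝ᵥ (A *ᵥ x) := by
      have h1 := hlicq.dotProduct_mulVec_nonneg c
      simp only [star_trivial, sub_mulVec, dotProduct_sub, smul_mulVec, one_mulVec,
        dotProduct_smul, smul_eq_mul] at h1
      rw [vnorm_sq, ← hMc]
      linarith
    have hCS : c ⬝ᵥ (A *ᵥ x) ≤ vnorm c * vnorm (A *ᵥ x) := dot_le_vnorm _ _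
    have hβy : β * vnorm y ^ 2 ≤ vnorm (A *ᵥ x) ^ 2 := by
      rw [hb2]
      nlinarith [sq_nonneg (β * vnorm c - vnorm (A *ᵥ x)), vnorm_nonneg c,
        vnorm_nonneg (A *ᵥ x), mul_le_mul_of_nonneg_left hCS hβ.le,
        mul_le_mul_of_nonneg_left (hcM.trans hCS) hβ.le]
    -- expand the quadratic form
    have h1 : x ⬝ᵥ (Q *ᵥ x)
        = z ⬝ᵥ (Q *ᵥ z) + 2 * (z ⬝ᵥ (Q *ᵥ y)) + y ⬝ᵥ (Q *ᵥ y) := by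
      rw [hxzy, mulVec_add, dotProduct_add, add_dotProduct, add_dotProduct, hsym]
      ring
    have hexp : x ⬝ᵥ ((Q + μ • (Aᵀ * A)) *ᵥ x)
        = z ⬝ᵥ (Q *ᵥ z) + 2 * (z ⬝ᵥ (Q *ᵥ y)) + y ⬝ᵥ (Q *ᵥ y)
          + μ * vnorm (A *ᵥ x) ^ 2 := by
      rw [add_mulVec, dotProduct_add, smul_mulVec, dotProduct_smul, smul_eq_mul,
        h1, hAx2]
    have hμAx : μ * β * vnorm y ^ 2 ≤ μ * vnorm (A *ᵥ x) ^ 2 := by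
      rw [mul_assoc]
      exact mul_le_mul_of_nonneg_left hβy hμpos.le
    have habstract : γ / 2 * (vnorm z ^ 2 + vnorm y ^ 2)
        ≤ γ * vnorm z ^ 2 + 2 * (-(vnorm z * (L * vnorm y)))
          + (-(vnorm y * (L * vnorm y))) + μ * β * vnorm y ^ 2 := by
      rw [hμβ]
      nlinarith [sq_nonneg (γ * vnorm z - 2 * L * vnorm y), hdivγ, mul_pos hγ hγ,
        sq_nonneg (vnorm y), hγ, hγ.le, ha0, hb0]
    rw [hexp, hx2]
    linarith
  have hH : (Q + μ • (Aᵀ * A)).IsHermitian := by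
    rw [Matrix.IsHermitian, conjTranspose_eq_transpose_of_trivial, transpose_add,
      transpose_smul, transpose_mul, transpose_transpose, hQsymm]
  constructor
  · refine posSemidef_iff_dotProduct_mulVec.mpr ⟨?_, fun x => ?_⟩
    · rw [Matrix.IsHermitian, conjTranspose_eq_transpose_of_trivial, transpose_sub,
        transpose_smul, transpose_one, transpose_add, transpose_smul, transpose_mul,
        transpose_transpose, hQsymm]
    · have hk := key x
      simp only [star_trivial, sub_mulVec, dotProduct_sub, smul_mulVec, one_mulVec,
        dotProduct_smul, smul_eq_mul]
      have hxx : x ⬝ᵥ x = vnorm x ^ 2 := (vnorm_sq x).symm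
      rw [hxx]
      linarith
  · refine posDef_iff_dotProduct_mulVec.mpr ⟨hH, fun x hx => ?_⟩
    have hk := key x
    have hxx : 0 < x ⬝ᵥ x := by
      rcases lt_or_eq_of_le (Finset.sum_nonneg fun i _ => mul_self_nonneg (x i)) with h | h
      · exact h
      · exact absurd (dotProduct_self_eq_zero.mp h.symm) hx
    rw [← vnorm_sq x] at hxx
    simp only [star_trivial]
    nlinarith
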